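/- Let f : [a,b] → ℝ be Hölder continuous of order r ∈ (0,1] with constant H and u of bounded variation on [a,b]. Then for all a ≤ t₀ ≤ x ≤ t₁ ≤ b, |∫ₐᵇ f du − [u(x) − u(a)]·f(t₀) − [u(b) − u(x)]·f(t₁)| ≤ H·( (x−a)/2 + |t₀ − (a+x)/2| )^r · V(u;[a,x]) + H·( (b−x)/2 + |t₁ − (x+b)/2| )^r · V(u;[x,b]). -/

import Mathlib

/-- A tagged partition of the interval `[a, b]`. -/
structure TaggedPartition (a b : ℝ) where
  n : ℕ
  pts : ℕ → ℝ
  tag : ℕ → ℝ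
  mono : ∀ i, pts i ≤ pts (i + 1)
  first : pts 0 = a
  last : pts n = b
  tag_mem : ∀ i, pts i ≤ tag i ∧ tag i ≤ pts (i + 1)

/-- The Riemann–Stieltjes sum of `f` with respect to `u` over a tagged partition. -/
def RSsum (f u : ℝ → ℝ) {a b : ℝ} (P : TaggedPartition a b) : ℝ :=
  ∑ i ∈ Finset.range P.n, f (P.tag i) * (u (P.pts (i + 1)) - u (P.pts i))

/-- `IsRSIntegral f u a b I` means the Riemann–Stieltjes integral `∫ₐᵇ f du` exists
and equals `I`: Riemann–Stieltjes sums converge to `I` as the mesh tends to `0`. -/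
def IsRSIntegral (f u : ℝ → ℝ) (a b I : ℝ) : Prop :=
  ∀ ε > 0, ∃ δ > 0, ∀ P : TaggedPartition a b,
    (∀ i < P.n, P.pts (i + 1) - P.pts i < δ) → |RSsum f u P - I| < ε

/-- The total (Jordan) variation of `u` on `[a, b]`. -/
noncomputable def totalVar (u : ℝ → ℝ) (a b : ℝ) : ℝ :=
  (eVariationOn u (Set.Icc a b)).toReal

/-!
Cut `[a, b]` at `x` and approximate `∫ₐᵇ f du` by Riemann–Stieltjes sums over partitions
having `x` as a node. On `[a, x]` such a sum differs from `(u x - u a) f(t₀)` by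
`∑ (f(ξᵢ) - f(t₀)) Δᵢu`, and every tag satisfies
`|ξᵢ - t₀| ≤ (x - a)/2 + |t₀ - (a + x)/2|`, so Hölder continuity bounds this error by
`H ((x - a)/2 + |t₀ - (a + x)/2|)^r V(u; [a, x])`; likewise on `[x, b]`. Letting the mesh
tend to `0` gives the estimate.
-/

open Finset Set

lemma abs_sub_le_half_length_add_abs_sub_midpoint {c d s : ℝ} (hs : s ∈ Icc c d) (t : ℝ) :
    |s - t| ≤ (d - c) / 2 + |t - (c + d) / 2| := by
  have hs' : |s - (c + d) / 2| ≤ (d - c) / 2 :=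
    abs_le.mpr ⟨by linarith [hs.1], by linarith [hs.2]⟩
  calc |s - t| ≤ |s - (c + d) / 2| + |(c + d) / 2 - t| := abs_sub_le _ _ _
    _ ≤ (d - c) / 2 + |t - (c + d) / 2| := by rw [abs_sub_comm ((c + d) / 2)]; linarith

lemma abs_sub_le_of_holder_of_mem_Icc {f : ℝ → ℝ} {S : Set ℝ} {H r c d s t : ℝ}
    (hr : 0 ≤ r) (hH : 0 ≤ H) (hf : ∀ s ∈ S, ∀ t ∈ S, |f s - f t| ≤ H * |s - t| ^ r)
    (hsS : s ∈ S) (hs : s ∈ Icc c d) (ht : t ∈ S) :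
    |f s - f t| ≤ H * ((d - c) / 2 + |t - (c + d) / 2|) ^ r :=
  (hf s hsS t ht).trans <| mul_le_mul_of_nonneg_left
    (Real.rpow_le_rpow (abs_nonneg _) (abs_sub_le_half_length_add_abs_sub_midpoint hs t) hr) hH

namespace TaggedPartition

variable {a b c : ℝ}

lemma monotone_pts (P : TaggedPartition a b) : Monotone P.pts :=
  monotone_nat_of_le_succ P.mono

lemma pts_mem_Icc (P : TaggedPartition a b) {i : ℕ} (hi : i ≤ P.n) : P.pts i ∈ Icc a b :=
  ⟨P.first.symm.trans_le (P.monotone_pts (Nat.zero_le i)), (P.monotone_pts hi).trans_eq P.last⟩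

lemma tag_mem_Icc (P : TaggedPartition a b) {i : ℕ} (hi : i < P.n) : P.tag i ∈ Icc a b :=
  ⟨(P.pts_mem_Icc hi.le).1.trans (P.tag_mem i).1, (P.tag_mem i).2.trans (P.pts_mem_Icc hi).2⟩

def MeshLT (P : TaggedPartition a b) (δ : ℝ) : Prop :=
  ∀ i < P.n, P.pts (i + 1) - P.pts i < δ

noncomputable def uniform (hab : a ≤ b) (N : ℕ) : TaggedPartition a b where
  n := N + 1
  pts i := a + i * ((b - a) / (N + 1))
  tag i := a + i * ((b - a) / (N + 1))
  mono i := by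
    have : 0 ≤ (b - a) / (N + 1) := div_nonneg (by linarith) (by positivity)
    push_cast; linarith
  first := by simp
  last := by push_cast; field_simp; ring
  tag_mem i := by
    have : 0 ≤ (b - a) / (N + 1) := div_nonneg (by linarith) (by positivity)
    push_cast; constructor <;> linarith

lemma exists_meshLT (hab : a ≤ b) {δ : ℝ} (hδ : 0 < δ) :
    ∃ P : TaggedPartition a b, P.MeshLT δ := by
  obtain ⟨N, hN⟩ := exists_nat_gt ((b - a) / δ)
  refine ⟨uniform hab N, fun i _ => ?_⟩
  have hstep : (uniform hab N).pts (i + 1) - (uniform hab N).pts i = (b - a) / (N + 1) := by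
    simp only [uniform]; push_cast; ring
  rw [hstep, div_lt_iff₀ (by positivity)]
  linarith [(div_lt_iff₀ hδ).mp hN]

def appendPts (P : TaggedPartition a b) (Q : TaggedPartition b c) (i : ℕ) : ℝ :=
  if i < P.n then P.pts i else Q.pts (i - P.n)

lemma appendPts_of_le (P : TaggedPartition a b) (Q : TaggedPartition b c) {i : ℕ}
    (hi : i ≤ P.n) : appendPts P Q i = P.pts i := by
  unfold appendPts
  split_ifs with h
  · rfl
  · rw [show i = P.n by omega, Nat.sub_self, Q.first, P.last]

lemma appendPts_of_ge (P : TaggedPartition a b) (Q : TaggedPartition b c) {i : ℕ}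
    (hi : P.n ≤ i) : appendPts P Q i = Q.pts (i - P.n) := by
  simp [appendPts, not_lt.mpr hi]

def append (P : TaggedPartition a b) (Q : TaggedPartition b c) : TaggedPartition a c where
  n := P.n + Q.n
  pts := appendPts P Q
  tag i := if i < P.n then P.tag i else Q.tag (i - P.n)
  mono i := by
    rcases lt_or_ge i P.n with hi | hi
    · rw [appendPts_of_le P Q hi.le, appendPts_of_le P Q hi]; exact P.mono i
    · rw [appendPts_of_ge P Q hi, appendPts_of_ge P Q (by omega), Nat.sub_add_comm hi]
      exact Q.mono _
  first := by rw [appendPts_of_le P Q (Nat.zero_le _), P.first]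
  last := by rw [appendPts_of_ge P Q (by omega), Nat.add_sub_cancel_left, Q.last]
  tag_mem i := by
    split_ifs with hi
    · rw [appendPts_of_le P Q hi.le, appendPts_of_le P Q hi]; exact P.tag_mem i
    · rw [appendPts_of_ge P Q (not_lt.mp hi), appendPts_of_ge P Q (by omega),
        Nat.sub_add_comm (not_lt.mp hi)]
      exact Q.tag_mem _

lemma MeshLT.append {P : TaggedPartition a b} {Q : TaggedPartition b c} {δ : ℝ}
    (hP : P.MeshLT δ) (hQ : Q.MeshLT δ) : (P.append Q).MeshLT δ := by
  intro i hi
  change appendPts P Q (i + 1) - appendPts P Q i < δ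
  rcases lt_or_ge i P.n with hiP | hiP
  · rw [appendPts_of_le P Q hiP.le, appendPts_of_le P Q hiP]; exact hP i hiP
  · rw [appendPts_of_ge P Q hiP, appendPts_of_ge P Q (by omega), Nat.sub_add_comm hiP]
    exact hQ _ (by change i < P.n + Q.n at hi; omega)

lemma RSsum_append (f u : ℝ → ℝ) (P : TaggedPartition a b) (Q : TaggedPartition b c) :
    RSsum f u (P.append Q) = RSsum f u P + RSsum f u Q := by
  dsimp only [RSsum, append]
  rw [sum_range_add]
  congr 1
  · refine sum_congr rfl fun i hi => ?_
    have hi := mem_range.mp hi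
    rw [if_pos hi, appendPts_of_le P Q hi, appendPts_of_le P Q hi.le]
  · refine sum_congr rfl fun k _ => ?_
    rw [if_neg (by omega), appendPts_of_ge P Q (by omega), appendPts_of_ge P Q (by omega)]
    simp only [Nat.add_sub_cancel_left, Nat.add_assoc]

lemma sum_abs_sub_le_totalVar (P : TaggedPartition a b) {u : ℝ → ℝ}
    (hu : BoundedVariationOn u (Icc a b)) :
    ∑ i ∈ range P.n, |u (P.pts (i + 1)) - u (P.pts i)| ≤ totalVar u a b := by
  have hvar := eVariationOn.sum_le_of_monotoneOn_Icc (f := u) (m := 0) (n := P.n)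
    (P.monotone_pts.monotoneOn _) fun i hi => P.pts_mem_Icc hi.2
  rw [← range_eq_Ico] at hvar
  calc ∑ i ∈ range P.n, |u (P.pts (i + 1)) - u (P.pts i)|
      = (∑ i ∈ range P.n, edist (u (P.pts (i + 1))) (u (P.pts i))).toReal := by
        rw [ENNReal.toReal_sum fun i _ => edist_ne_top _ _]
        simp only [edist_dist, Real.dist_eq, ENNReal.toReal_ofReal (abs_nonneg _)]
    _ ≤ totalVar u a b := ENNReal.toReal_mono hu hvar

lemma abs_RSsum_sub_le_mul_totalVar (P : TaggedPartition a b) {f u : ℝ → ℝ} {t K : ℝ}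
    (hu : BoundedVariationOn u (Icc a b)) (hK : 0 ≤ K)
    (hf : ∀ i < P.n, |f (P.tag i) - f t| ≤ K) :
    |RSsum f u P - (u b - u a) * f t| ≤ K * totalVar u a b := by
  have htelescope : ∑ i ∈ range P.n, (u (P.pts (i + 1)) - u (P.pts i)) = u b - u a := by
    rw [sum_range_sub (fun i => u (P.pts i)), P.last, P.first]
  have herror : RSsum f u P - (u b - u a) * f t =
      ∑ i ∈ range P.n, (f (P.tag i) - f t) * (u (P.pts (i + 1)) - u (P.pts i)) := by
    rw [← htelescope, sum_mul, RSsum, ← sum_sub_distrib]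
    exact sum_congr rfl fun i _ => by ring
  calc |RSsum f u P - (u b - u a) * f t|
      ≤ ∑ i ∈ range P.n, |f (P.tag i) - f t| * |u (P.pts (i + 1)) - u (P.pts i)| := by
        rw [herror, ← sum_congr rfl fun i _ => abs_mul _ _]; exact abs_sum_le_sum_abs _ _
    _ ≤ ∑ i ∈ range P.n, K * |u (P.pts (i + 1)) - u (P.pts i)| :=
        sum_le_sum fun i hi => mul_le_mul_of_nonneg_right (hf i (mem_range.mp hi)) (abs_nonneg _)
    _ ≤ K * totalVar u a b := by
        rw [← mul_sum]; exact mul_le_mul_of_nonneg_left (P.sum_abs_sub_le_totalVar hu) hK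

end TaggedPartition

theorem two_point_quadrature_refined_bounded_variation_general
    (a b H r t0 x t1 I : ℝ) (f u : ℝ → ℝ)
    (hr : 0 < r) (hH : 0 ≤ H)
    (hf : ∀ s ∈ Set.Icc a b, ∀ t ∈ Set.Icc a b, |f s - f t| ≤ H * |s - t| ^ r)
    (hu : BoundedVariationOn u (Set.Icc a b))
    (ht0 : a ≤ t0) (ht0x : t0 ≤ x) (hxt1 : x ≤ t1) (ht1 : t1 ≤ b)
    (hI : IsRSIntegral f u a b I) :
    |I - (u x - u a) * f t0 - (u b - u x) * f t1| ≤
      H * ((x - a) / 2 + |t0 - (a + x) / 2|) ^ r * totalVar u a x +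
        H * ((b - x) / 2 + |t1 - (x + b) / 2|) ^ r * totalVar u x b := by
  have hax : a ≤ x := ht0.trans ht0x
  have hxb : x ≤ b := hxt1.trans ht1
  have hholder {c d t s : ℝ} (hcd : Icc c d ⊆ Icc a b) (ht : t ∈ Icc a b)
      (hs : s ∈ Icc c d) :=
    abs_sub_le_of_holder_of_mem_Icc hr.le hH hf (hcd hs) hs ht
  refine le_of_forall_pos_le_add fun ε hε => ?_
  obtain ⟨δ, hδ, hIδ⟩ := hI ε hε
  obtain ⟨P, hP⟩ := TaggedPartition.exists_meshLT hax hδ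
  obtain ⟨Q, hQ⟩ := TaggedPartition.exists_meshLT hxb hδ
  have hPQ := hIδ (P.append Q) (hP.append hQ)
  rw [TaggedPartition.RSsum_append] at hPQ
  have hleft := P.abs_RSsum_sub_le_mul_totalVar (hu.mono (Icc_subset_Icc_right hxb))
    (by positivity) fun i hi => hholder (Icc_subset_Icc_right hxb) ⟨ht0, ht0x.trans hxb⟩
      (P.tag_mem_Icc hi)
  have hright := Q.abs_RSsum_sub_le_mul_totalVar (hu.mono (Icc_subset_Icc_left hax))
    (by positivity) fun i hi => hholder (Icc_subset_Icc_left hax) ⟨hax.trans hxt1, ht1⟩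
      (Q.tag_mem_Icc hi)
  rw [abs_sub_lt_iff] at hPQ
  rw [abs_le] at hleft hright ⊢
  constructor <;> linarith

theorem two_point_quadrature_refined_bounded_variation
    (a b H r t0 x t1 I : ℝ) (f u : ℝ → ℝ)
    (hr : 0 < r) (hr1 : r ≤ 1) (hH : 0 ≤ H)
    (hf : ∀ s ∈ Set.Icc a b, ∀ t ∈ Set.Icc a b, |f s - f t| ≤ H * |s - t| ^ r)
    (hu : BoundedVariationOn u (Set.Icc a b))
    (ht0 : a ≤ t0) (ht0x : t0 ≤ x) (hxt1 : x ≤ t1) (ht1 : t1 ≤ b)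
    (hI : IsRSIntegral f u a b I) :
    |I - (u x - u a) * f t0 - (u b - u x) * f t1| ≤
      H * ((x - a) / 2 + |t0 - (a + x) / 2|) ^ r * totalVar u a x +
        H * ((b - x) / 2 + |t1 - (x + b) / 2|) ^ r * totalVar u x b :=
  two_point_quadrature_refined_bounded_variation_general a b H r t0 x t1 I f u hr hH hf hu ht0 ht0x
    hxt1 ht1 hI
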